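/- Every tree T is 3-mixing: any two proper 3-colourings of a tree can be transformed into one another by single-vertex recolourings, each intermediate colouring being a proper 3-colouring. -/

import Mathlib

/-!
Remove a leaf `v` of the tree and connect the restrictions of the two colourings inside the
smaller tree. Each step of that sequence lifts to the whole tree: `v` has a single neighbour, so
with three colours there is always a colour for `v` that avoids both its neighbour's colour and
the colour about to be used (in general `degree v + 2` colours suffice), and `v` can be
recoloured to it first. A final recolouring of `v` ends at the target colouring.
-/

/-- `c` is a proper `k`-colouring of `G`. -/
def IsProperColoring {V : Type} (G : SimpleGraph V) {k : ℕ} (c : V → Fin k) : Prop :=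
  ∀ ⦃u v : V⦄, G.Adj u v → c u ≠ c v

/-- A single-vertex recolouring step between proper `k`-colourings. -/
def RecolStep {V : Type} (G : SimpleGraph V) {k : ℕ} (c c' : V → Fin k) : Prop :=
  IsProperColoring G c ∧ IsProperColoring G c' ∧
    ∃ v : V, c v ≠ c' v ∧ ∀ w : V, w ≠ v → c w = c' w

/-- `G` is `k`-mixing: any two proper `k`-colourings are connected by
single-vertex recolourings. -/
def IsMixing {V : Type} (G : SimpleGraph V) (k : ℕ) : Prop :=
  ∀ c c' : V → Fin k, IsProperColoring G c → IsProperColoring G c' →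
    Relation.ReflTransGen (RecolStep G) c c'

open SimpleGraph Relation

section Recolouring

variable {V : Type} {G : SimpleGraph V} {k : ℕ}

theorem IsProperColoring.induce {c : V → Fin k} (hc : IsProperColoring G c) (s : Set V) :
    IsProperColoring (G.induce s) (c ∘ Subtype.val) :=
  fun _ _ hxy => hc hxy

theorem IsProperColoring.update [DecidableEq V] {c : V → Fin k} (hc : IsProperColoring G c)
    {v : V} {a : Fin k} (ha : ∀ w, G.Adj v w → a ≠ c w) :
    IsProperColoring G (Function.update c v a) := by
  intro x y hxy
  rcases eq_or_ne x v with rfl | hx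
  · simpa [hxy.ne'] using ha y hxy
  rcases eq_or_ne y v with rfl | hy
  · simpa [hx] using (ha x hxy.symm).symm
  simpa [hx, hy] using hc hxy

theorem IsProperColoring.of_reflTransGen {c c' : V → Fin k} (hc : IsProperColoring G c)
    (h : ReflTransGen (RecolStep G) c c') : IsProperColoring G c' := by
  rcases h.cases_tail with rfl | ⟨_, _, hstep⟩
  exacts [hc, hstep.2.1]

theorem reflTransGen_recolStep_of_forall_ne_eq {c c' : V → Fin k} (hc : IsProperColoring G c)
    (hc' : IsProperColoring G c') (v : V) (h : ∀ w, w ≠ v → c w = c' w) :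
    ReflTransGen (RecolStep G) c c' := by
  by_cases hv : c v = c' v
  · obtain rfl : c = c' := funext fun w => by
      by_cases hw : w = v
      exacts [hw ▸ hv, h w hw]
    exact ReflTransGen.refl
  · exact ReflTransGen.single ⟨hc, hc', v, hv, h⟩

/-- At most `degree v + 1` colours are excluded at `v`, so one of the `k` colours is free. -/
theorem exists_reflTransGen_recolStep_apply_ne {v : V} [Fintype (G.neighborSet v)]
    (hk : G.degree v + 2 ≤ k) {e : V → Fin k} (he : IsProperColoring G e) (β : Fin k) :
    ∃ e₁, (∀ w, w ≠ v → e₁ w = e w) ∧ e₁ v ≠ β ∧ ReflTransGen (RecolStep G) e e₁ := by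
  classical
  let excluded := insert β ((G.neighborFinset v).image e)
  have hcard : excluded.card < (Finset.univ : Finset (Fin k)).card := calc
    excluded.card ≤ G.degree v + 1 :=
      (Finset.card_insert_le _ _).trans (Nat.succ_le_succ Finset.card_image_le)
    _ < _ := by rw [Finset.card_univ, Fintype.card_fin]; omega
  obtain ⟨b, -, hb⟩ := Finset.exists_mem_notMem_of_card_lt_card hcard
  have hbβ : b ≠ β := fun h => hb (by simp [excluded, h])
  have hbN : ∀ w, G.Adj v w → b ≠ e w := fun w hw h =>
    hb (Finset.mem_insert_of_mem (Finset.mem_image.2 ⟨w, by simpa using hw, h.symm⟩))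
  refine ⟨Function.update e v b, fun w hw => Function.update_of_ne hw _ _, by simpa, ?_⟩
  exact reflTransGen_recolStep_of_forall_ne_eq he (he.update hbN) v fun w hw =>
    (Function.update_of_ne hw _ _).symm

theorem exists_lift_recolStep {v : V} [Fintype (G.neighborSet v)] (hk : G.degree v + 2 ≤ k)
    {e : V → Fin k} (he : IsProperColoring G e) {d' : ({v}ᶜ : Set V) → Fin k}
    (hstep : RecolStep (G.induce {v}ᶜ) (e ∘ Subtype.val) d') :
    ∃ e', e' ∘ Subtype.val = d' ∧ ReflTransGen (RecolStep G) e e' := by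
  classical
  obtain ⟨-, hd', x, -, hagree⟩ := hstep
  obtain ⟨e₁, he₁, hv, h₁⟩ := exists_reflTransGen_recolStep_apply_ne hk he (d' x)
  have hd'_eq : ∀ w : ({v}ᶜ : Set V), w ≠ x → e₁ w = d' w := fun w hw =>
    (he₁ w w.2).trans (hagree w hw)
  have hfree : ∀ w, G.Adj x w → d' x ≠ e₁ w := by
    intro w hxw
    rcases eq_or_ne w v with rfl | hw
    · exact hv.symm
    · rw [hd'_eq ⟨w, hw⟩ fun h => hxw.ne (congrArg Subtype.val h).symm]
      exact hd' (show (G.induce {v}ᶜ).Adj x ⟨w, hw⟩ from hxw)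
  refine ⟨Function.update e₁ x (d' x), ?_, h₁.trans ?_⟩
  · funext w
    by_cases hw : w = x
    · subst hw; simp
    · simpa [Function.update_of_ne (Subtype.val_injective.ne hw)] using hd'_eq w hw
  · exact reflTransGen_recolStep_of_forall_ne_eq (he.of_reflTransGen h₁)
      ((he.of_reflTransGen h₁).update hfree) x fun w hw =>
        (Function.update_of_ne hw _ _).symm

theorem exists_lift_reflTransGen {v : V} [Fintype (G.neighborSet v)] (hk : G.degree v + 2 ≤ k)
    {d d' : ({v}ᶜ : Set V) → Fin k} (h : ReflTransGen (RecolStep (G.induce {v}ᶜ)) d d')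
    {e : V → Fin k} (he : IsProperColoring G e) (hed : e ∘ Subtype.val = d) :
    ∃ e', e' ∘ Subtype.val = d' ∧ ReflTransGen (RecolStep G) e e' := by
  induction h with
  | refl => exact ⟨e, hed, ReflTransGen.refl⟩
  | tail _ hstep ih =>
    obtain ⟨e₁, rfl, h₁⟩ := ih
    obtain ⟨e', he', h₂⟩ := exists_lift_recolStep hk (he.of_reflTransGen h₁) hstep
    exact ⟨e', he', h₁.trans h₂⟩

theorem IsMixing.of_induce_compl_singleton {v : V} [Fintype (G.neighborSet v)]
    (hk : G.degree v + 2 ≤ k) (h : IsMixing (G.induce {v}ᶜ) k) : IsMixing G k := by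
  intro c c' hc hc'
  obtain ⟨e', he', hce'⟩ := exists_lift_reflTransGen hk
    (h _ _ (hc.induce {v}ᶜ) (hc'.induce {v}ᶜ)) hc rfl
  exact hce'.trans (reflTransGen_recolStep_of_forall_ne_eq (hc.of_reflTransGen hce') hc' v
    fun w hw => congrFun he' ⟨w, hw⟩)

end Recolouring

theorem SimpleGraph.IsTree.isMixing {V : Type} [Finite V] {G : SimpleGraph V} (hT : G.IsTree)
    {k : ℕ} (hk : 3 ≤ k) : IsMixing G k := by
  classical
  induction h : Nat.card V using Nat.strong_induction_on generalizing V with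
  | _ n ih =>
    cases subsingleton_or_nontrivial V with
    | inl _ =>
      obtain ⟨v⟩ := hT.connected.nonempty
      exact fun c c' hc hc' => reflTransGen_recolStep_of_forall_ne_eq hc hc' v
        fun w hw => absurd (Subsingleton.elim w v) hw
    | inr _ =>
      have := Fintype.ofFinite V
      obtain ⟨v, hv⟩ := hT.exists_vert_degree_one_of_nontrivial
      have hT' : (G.induce {v}ᶜ).IsTree :=
        ⟨hT.connected.induce_compl_singleton_of_degree_eq_one hv, hT.isAcyclic.induce _⟩
      have hcard : Nat.card ({v}ᶜ : Set V) < n :=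
        h ▸ Finite.card_subtype_lt (p := (· ∈ ({v}ᶜ : Set V))) (x := v) (by simp)
      exact IsMixing.of_induce_compl_singleton (v := v) (by omega) (ih _ hcard hT' rfl)

/-- Every tree is 3-mixing. -/
theorem tree_three_mixing {V : Type} [Fintype V] (G : SimpleGraph V) (hT : G.IsTree) :
    IsMixing G 3 :=
  hT.isMixing le_rfl
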